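/- Let N ≥ 2, M = (N−1)² + 1, U ∈ (0,1), and let (cₖ, fₖ, θₖ), k = 1,…,K, with cₖ ∈ ℂ \ {0}, fₖ ∈ [0,1), θₖ ∈ [0,U]. Set z* = Σₖ cₖ d(fₖ,θₖ). Suppose there exists q ∈ ℂ^N such that the dual polynomial Q(f,θ) = Σ_{n=0}^{N−1} q(n) e^{−2πi(fn+θn²)} satisfies Q(fₖ,θₖ) = cₖ/|cₖ| for every k and |Q(f,θ)| ≤ 1 for all (f,θ) ∈ [0,1)×[0,U]. Then ‖z*‖_{A_c} = Σₖ |cₖ|, and z* minimizes ‖z‖_{A_c} over all z ∈ ℂ^{NM} with P z = P z*. -/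

import Mathlib

open Complex Set
open scoped Real ENNReal ComplexConjugate ComplexOrder

noncomputable section

def atomA (N : ℕ) (f : ℝ) : Fin N → ℂ :=
  fun n => Complex.exp (2 * (Real.pi : ℂ) * Complex.I * ((n : ℕ) : ℂ) * (f : ℂ))

def atomB (N : ℕ) (θ : ℝ) : Fin ((N - 1) ^ 2 + 1) → ℂ :=
  fun m => Complex.exp (2 * (Real.pi : ℂ) * Complex.I * ((m : ℕ) : ℂ) * (θ : ℂ))

def atomD (N : ℕ) (f θ : ℝ) : Fin N × Fin ((N - 1) ^ 2 + 1) → ℂ :=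
  fun p => atomA N f p.1 * atomB N θ p.2

def meas (N : ℕ) (z : Fin N × Fin ((N - 1) ^ 2 + 1) → ℂ) : Fin N → ℂ :=
  fun n => z (n, ⟨n.1 ^ 2, by
    have h1 : n.1 < N := n.2
    have h2 : n.1 ^ 2 ≤ (N - 1) ^ 2 := Nat.pow_le_pow_left (by omega) 2
    omega⟩)

def atomicNorm (N : ℕ) (U : ℝ) (z : Fin N × Fin ((N - 1) ^ 2 + 1) → ℂ) : ℝ≥0∞ :=
  sInf { s : ℝ≥0∞ | ∃ (K : ℕ) (c : Fin K → ℂ) (f θ : Fin K → ℝ),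
    (∀ k, f k ∈ Set.Ico (0 : ℝ) 1) ∧ (∀ k, θ k ∈ Set.Icc (0 : ℝ) U) ∧
    z = ∑ k, c k • atomD N (f k) (θ k) ∧
    s = ∑ k, ENNReal.ofReal ‖c k‖ }

def dualPoly (N : ℕ) (q : Fin N → ℂ) (f θ : ℝ) : ℂ :=
  ∑ n : Fin N, q n * Complex.exp (-(2 * (Real.pi : ℂ) * Complex.I) *
    ((f : ℂ) * ((n : ℕ) : ℂ) + (θ : ℂ) * ((n : ℕ) : ℂ) ^ 2))

def twoFoldToep (N : ℕ) (T : ℤ → ℤ → ℂ) :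
    Matrix (Fin N × Fin ((N - 1) ^ 2 + 1)) (Fin N × Fin ((N - 1) ^ 2 + 1)) ℂ :=
  Matrix.of fun p q => T (((p.1 : ℕ) : ℤ) - ((q.1 : ℕ) : ℤ)) (((p.2 : ℕ) : ℤ) - ((q.2 : ℕ) : ℤ))

def twoFoldToepG (N : ℕ) (U : ℝ) (T : ℤ → ℤ → ℂ) :
    Matrix (Fin N × Fin ((N - 1) ^ 2)) (Fin N × Fin ((N - 1) ^ 2)) ℂ :=
  Matrix.of fun p q =>
    Complex.exp ((Real.pi : ℂ) * Complex.I * (U : ℂ)) *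
        T (((p.1 : ℕ) : ℤ) - ((q.1 : ℕ) : ℤ)) (((p.2 : ℕ) : ℤ) - ((q.2 : ℕ) : ℤ) + 1)
      + ((-2 * Real.cos (Real.pi * U) : ℝ) : ℂ) *
        T (((p.1 : ℕ) : ℤ) - ((q.1 : ℕ) : ℤ)) (((p.2 : ℕ) : ℤ) - ((q.2 : ℕ) : ℤ))
      + conj (Complex.exp ((Real.pi : ℂ) * Complex.I * (U : ℂ))) *
        T (((p.1 : ℕ) : ℤ) - ((q.1 : ℕ) : ℤ)) (((p.2 : ℕ) : ℤ) - ((q.2 : ℕ) : ℤ) - 1)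

def blockMat {ι : Type*} [Fintype ι] (W : Matrix ι ι ℂ) (z : ι → ℂ) (t : ℝ) :
    Matrix (ι ⊕ Unit) (ι ⊕ Unit) ℂ :=
  Matrix.fromBlocks W (Matrix.of fun i (_ : Unit) => z i)
    (Matrix.of fun (_ : Unit) j => conj (z j)) (Matrix.of fun (_ : Unit) (_ : Unit) => (t : ℂ))

def sdpVal (N : ℕ) (U : ℝ) (z : Fin N × Fin ((N - 1) ^ 2 + 1) → ℂ) : ℝ≥0∞ :=
  sInf { s : ℝ≥0∞ | ∃ (T : ℤ → ℤ → ℂ) (t : ℝ),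
    (blockMat (twoFoldToep N T) z t).PosSemidef ∧
    (twoFoldToepG N U T).PosSemidef ∧
    s = ENNReal.ofReal ((1 / (2 * ((N * ((N - 1) ^ 2 + 1) : ℕ) : ℝ))) *
          ((twoFoldToep N T).trace).re + t / 2) }

def measMat (N : ℕ) : Matrix (Fin N) (Fin N × Fin ((N - 1) ^ 2 + 1)) ℂ :=
  Matrix.of fun n p => if p.1 = n ∧ (p.2 : ℕ) = n.1 ^ 2 then 1 else 0

def gval (U θ : ℝ) : ℂ :=
  Complex.exp ((Real.pi : ℂ) * Complex.I * (U : ℂ)) * Complex.exp (-(2 * (Real.pi : ℂ) * Complex.I) * (θ : ℂ))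
    + ((-2 * Real.cos (Real.pi * U) : ℝ) : ℂ)
    + conj (Complex.exp ((Real.pi : ℂ) * Complex.I * (U : ℂ))) * Complex.exp ((2 * (Real.pi : ℂ) * Complex.I) * (θ : ℂ))

def atomBt (N : ℕ) (θ : ℝ) : Fin ((N - 1) ^ 2) → ℂ :=
  fun m => Complex.exp (2 * (Real.pi : ℂ) * Complex.I * ((m : ℕ) : ℂ) * (θ : ℂ))

def atomDt (N : ℕ) (f θ : ℝ) : Fin N × Fin ((N - 1) ^ 2) → ℂ :=
  fun p => atomA N f p.1 * atomBt N θ p.2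

/-
The vector `q` acts on measurements by `w ↦ q ⬝ᵥ star w`, and on the measurement of an atom this
gives exactly the dual polynomial: `q ⬝ᵥ star (P d(f, θ)) = Q(f, θ)`. Hence for every decomposition
`z = Σⱼ c'ⱼ d(f'ⱼ, θ'ⱼ)` with admissible parameters, `|q ⬝ᵥ star (P z)| ≤ Σⱼ |c'ⱼ|` because `|Q| ≤ 1`
there, so `|q ⬝ᵥ star (P z)|` bounds the atomic norm of `z` from below. For `z` with `P z = P z⋆`
the interpolation conditions `Q(fₖ, θₖ) = cₖ / |cₖ|` make this lower bound `Σₖ |cₖ|`, which the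
decomposition of `z⋆` attains.
-/

lemma conj_meas_atomD (N : ℕ) (f θ : ℝ) (n : Fin N) :
    conj (meas N (atomD N f θ) n) =
      Complex.exp (-(2 * (Real.pi : ℂ) * Complex.I) *
        ((f : ℂ) * ((n : ℕ) : ℂ) + (θ : ℂ) * ((n : ℕ) : ℂ) ^ 2)) := by
  simp only [meas, atomD, atomA, atomB, map_mul]
  rw [← Complex.exp_conj, ← Complex.exp_conj, ← Complex.exp_add]
  congr 1
  simp only [map_mul, Complex.conj_I, Complex.conj_ofReal, map_ofNat, map_natCast]
  push_cast
  ring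

lemma dotProduct_star_meas_sum_smul_atomD (N : ℕ) (q : Fin N → ℂ) {K : ℕ} (c : Fin K → ℂ)
    (f θ : Fin K → ℝ) :
    q ⬝ᵥ star (meas N (∑ k, c k • atomD N (f k) (θ k))) =
      ∑ k, conj (c k) * dualPoly N q (f k) (θ k) := by
  have hmeas : ∀ n, meas N (∑ k, c k • atomD N (f k) (θ k)) n
      = ∑ k, c k * meas N (atomD N (f k) (θ k)) n := by
    intro n
    simp [meas, Finset.sum_apply]
  simp only [dotProduct, Pi.star_apply, Complex.star_def, hmeas, map_sum, map_mul,
    conj_meas_atomD, dualPoly, Finset.mul_sum]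
  rw [Finset.sum_comm]
  refine Finset.sum_congr rfl fun k _ => Finset.sum_congr rfl fun n _ => ?_
  ring

lemma atomicNorm_sum_smul_atomD_le (N : ℕ) {U : ℝ} {K : ℕ} (c : Fin K → ℂ) {f θ : Fin K → ℝ}
    (hf : ∀ k, f k ∈ Set.Ico (0 : ℝ) 1) (hθ : ∀ k, θ k ∈ Set.Icc (0 : ℝ) U) :
    atomicNorm N U (∑ k, c k • atomD N (f k) (θ k)) ≤ ∑ k, ENNReal.ofReal ‖c k‖ :=
  sInf_le ⟨K, c, f, θ, hf, hθ, rfl, rfl⟩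

lemma ofReal_norm_dotProduct_star_meas_le_atomicNorm {N : ℕ} {U : ℝ} {q : Fin N → ℂ}
    (hQle : ∀ f θ : ℝ, f ∈ Set.Ico (0 : ℝ) 1 → θ ∈ Set.Icc (0 : ℝ) U →
      ‖dualPoly N q f θ‖ ≤ 1)
    (z : Fin N × Fin ((N - 1) ^ 2 + 1) → ℂ) :
    ENNReal.ofReal ‖q ⬝ᵥ star (meas N z)‖ ≤ atomicNorm N U z := by
  refine le_sInf ?_
  rintro _ ⟨K, c, f, θ, hf, hθ, rfl, rfl⟩
  rw [← ENNReal.ofReal_sum_of_nonneg fun k _ => norm_nonneg _]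
  refine ENNReal.ofReal_le_ofReal ?_
  calc ‖q ⬝ᵥ star (meas N (∑ k, c k • atomD N (f k) (θ k)))‖
      = ‖∑ k, conj (c k) * dualPoly N q (f k) (θ k)‖ := by
        rw [dotProduct_star_meas_sum_smul_atomD]
    _ ≤ ∑ k, ‖c k‖ * ‖dualPoly N q (f k) (θ k)‖ := by
        simpa only [norm_mul, Complex.norm_conj] using
          norm_sum_le Finset.univ fun k => conj (c k) * dualPoly N q (f k) (θ k)
    _ ≤ ∑ k, ‖c k‖ := Finset.sum_le_sum fun k _ =>
        mul_le_of_le_one_right (norm_nonneg _) (hQle _ _ (hf k) (hθ k))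

lemma conj_mul_div_norm (c : ℂ) : conj c * (c / ‖c‖) = ‖c‖ := by
  rw [← mul_div_assoc, Complex.conj_mul', sq, mul_self_div_self]

theorem atomicNorm_eq_and_min_of_dual_certificate_general (N : ℕ) (U : ℝ)
    (K : ℕ) (c : Fin K → ℂ) (f θ : Fin K → ℝ)
    (hf : ∀ k, f k ∈ Set.Ico (0 : ℝ) 1) (hθ : ∀ k, θ k ∈ Set.Icc (0 : ℝ) U)
    (q : Fin N → ℂ)
    (hQeq : ∀ k, dualPoly N q (f k) (θ k) = c k / (‖c k‖ : ℂ))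
    (hQle : ∀ f' θ' : ℝ, f' ∈ Set.Ico (0 : ℝ) 1 → θ' ∈ Set.Icc (0 : ℝ) U →
      ‖dualPoly N q f' θ'‖ ≤ 1) :
    atomicNorm N U (∑ k, c k • atomD N (f k) (θ k))
        = ∑ k, ENNReal.ofReal ‖c k‖ ∧
      ∀ z : Fin N × Fin ((N - 1) ^ 2 + 1) → ℂ,
        meas N z = meas N (∑ k, c k • atomD N (f k) (θ k)) →
        atomicNorm N U (∑ k, c k • atomD N (f k) (θ k)) ≤ atomicNorm N U z := by
  set zs := ∑ k, c k • atomD N (f k) (θ k) with hzs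
  have hcert : ENNReal.ofReal ‖q ⬝ᵥ star (meas N zs)‖ = ∑ k, ENNReal.ofReal ‖c k‖ := by
    simp only [hzs, dotProduct_star_meas_sum_smul_atomD, hQeq, conj_mul_div_norm]
    rw [← Complex.ofReal_sum, Complex.norm_real,
      Real.norm_of_nonneg (Finset.sum_nonneg fun k _ => norm_nonneg _),
      ENNReal.ofReal_sum_of_nonneg fun k _ => norm_nonneg _]
  have hlower : ∀ z, meas N z = meas N zs → ∑ k, ENNReal.ofReal ‖c k‖ ≤ atomicNorm N U z := by
    intro z hz
    rw [← hcert, ← hz]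
    exact ofReal_norm_dotProduct_star_meas_le_atomicNorm hQle z
  have heq : atomicNorm N U zs = ∑ k, ENNReal.ofReal ‖c k‖ :=
    le_antisymm (atomicNorm_sum_smul_atomD_le N c hf hθ) (hlower zs rfl)
  exact ⟨heq, fun z hz => heq ▸ hlower z hz⟩

/-- A (non-strict) dual certificate implies that the atomic norm of `z⋆` is
`Σₖ |cₖ|` and that `z⋆` minimizes the constrained atomic norm subject to `Pz = Pz⋆`. -/
theorem atomicNorm_eq_and_min_of_dual_certificate (N : ℕ) (hN : 2 ≤ N) (U : ℝ)
    (hU : U ∈ Set.Ioo (0 : ℝ) 1) (K : ℕ) (c : Fin K → ℂ) (f θ : Fin K → ℝ)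
    (hc : ∀ k, c k ≠ 0)
    (hf : ∀ k, f k ∈ Set.Ico (0 : ℝ) 1) (hθ : ∀ k, θ k ∈ Set.Icc (0 : ℝ) U)
    (q : Fin N → ℂ)
    (hQeq : ∀ k, dualPoly N q (f k) (θ k) = c k / (‖c k‖ : ℂ))
    (hQle : ∀ f' θ' : ℝ, f' ∈ Set.Ico (0 : ℝ) 1 → θ' ∈ Set.Icc (0 : ℝ) U →
      ‖dualPoly N q f' θ'‖ ≤ 1) :
    atomicNorm N U (∑ k, c k • atomD N (f k) (θ k))
        = ∑ k, ENNReal.ofReal ‖c k‖ ∧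
      ∀ z : Fin N × Fin ((N - 1) ^ 2 + 1) → ℂ,
        meas N z = meas N (∑ k, c k • atomD N (f k) (θ k)) →
        atomicNorm N U (∑ k, c k • atomD N (f k) (θ k)) ≤ atomicNorm N U z :=
  atomicNorm_eq_and_min_of_dual_certificate_general N U K c f θ hf hθ q hQeq hQle

end
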